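/- arXiv:1611.04231 — 4 statements merged into one kernel-verified Lean document; each statement's English description precedes it below -/
import Mathlib

section
/- Let Q ∈ R^{2×2} be an orthogonal matrix. Then for any positive integer q, there exist matrices W_1, …, W_q ∈ R^{2×2} with ‖W_j − I‖ ≤ π/q for all j, and a diagonal matrix Λ with diagonal entries in {−1, 1}, such that Q = W_1 ⋯ W_q Λ; moreover if Q is a rotation (det Q = 1) then Λ can be taken to be the identity. -/
open Matrix

/-- Spectral (operator) norm of a square real matrix: the operator norm of the
induced linear map on Euclidean space. -/
noncomputable def specNorm {d : ℕ} (A : Matrix (Fin d) (Fin d) ℝ) : ℝ :=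
  ‖LinearMap.toContinuousLinearMap (Matrix.toEuclideanLin A)‖

/-- Smallest singular value of a square real matrix: the infimum of `‖A x‖`
over unit vectors `x`. -/
noncomputable def sigmaMin {d : ℕ} (A : Matrix (Fin d) (Fin d) ℝ) : ℝ :=
  ⨅ x : Metric.sphere (0 : EuclideanSpace ℝ (Fin d)) 1, ‖Matrix.toEuclideanLin A (x : EuclideanSpace ℝ (Fin d))‖

/-- Frobenius norm of a real matrix. -/
noncomputable def frobNorm {m n : ℕ} (A : Matrix (Fin m) (Fin n) ℝ) : ℝ :=
  Real.sqrt (∑ i, ∑ j, (A i j) ^ 2)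

/-!
An orthogonal `2 × 2` matrix `Q` equals `R_θ · diag(1, det Q)`, where `R_θ` is the rotation by
the argument `θ ∈ [-π, π]` of its first column read as a unit complex number. Take every `W_j`
to be `R_{θ/q}`: a rotation `R_φ` moves each vector `x` by a chord of length
`2 |sin (φ / 2)| ‖x‖ ≤ |φ| ‖x‖`, so `‖R_φ - I‖ ≤ |φ|`.
-/

noncomputable def rotationMatrix (θ : ℝ) : Matrix (Fin 2) (Fin 2) ℝ :=
  !![Real.cos θ, -Real.sin θ; Real.sin θ, Real.cos θ]

lemma rotationMatrix_zero : rotationMatrix 0 = 1 := by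
  ext i j; fin_cases i <;> fin_cases j <;> simp [rotationMatrix]

lemma rotationMatrix_add (α β : ℝ) :
    rotationMatrix (α + β) = rotationMatrix α * rotationMatrix β := by
  simp only [rotationMatrix, mul_fin_two, Real.cos_add, Real.sin_add]
  congr 1; ring_nf

lemma rotationMatrix_nsmul (n : ℕ) (θ : ℝ) : rotationMatrix (n • θ) = rotationMatrix θ ^ n := by
  induction n with
  | zero => rw [zero_nsmul, rotationMatrix_zero, pow_zero]
  | succ n ih => rw [succ_nsmul, rotationMatrix_add, ih, pow_succ]

lemma norm_toEuclideanLin_conformal (a b : ℝ) (x : EuclideanSpace ℝ (Fin 2)) :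
    ‖toEuclideanLin !![a, -b; b, a] x‖ = √(a ^ 2 + b ^ 2) * ‖x‖ := by
  rw [← sq_eq_sq₀ (norm_nonneg _) (by positivity), mul_pow, Real.sq_sqrt (by positivity),
    EuclideanSpace.norm_sq_eq, EuclideanSpace.norm_sq_eq]
  simp only [ofLp_toLpLin, toLin'_apply, mulVec, dotProduct, of_apply, cons_val', cons_val_fin_one,
    Fin.sum_univ_two, Fin.isValue, cons_val_zero, cons_val_one, Real.norm_eq_abs, sq_abs]
  ring

lemma specNorm_conformal_le (a b : ℝ) : specNorm !![a, -b; b, a] ≤ √(a ^ 2 + b ^ 2) :=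
  ContinuousLinearMap.opNorm_le_bound _ (Real.sqrt_nonneg _) fun x =>
    (norm_toEuclideanLin_conformal a b x).le

lemma specNorm_rotationMatrix_sub_one_le (θ : ℝ) : specNorm (rotationMatrix θ - 1) ≤ |θ| := by
  have hsub : rotationMatrix θ - 1 =
      !![Real.cos θ - 1, -Real.sin θ; Real.sin θ, Real.cos θ - 1] := by
    ext i j; fin_cases i <;> fin_cases j <;> simp [rotationMatrix]
  have hchord : (Real.cos θ - 1) ^ 2 + Real.sin θ ^ 2 ≤ θ ^ 2 := by
    nlinarith [Real.one_sub_sq_div_two_le_cos (x := θ), Real.sin_sq_add_cos_sq θ]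
  calc specNorm (rotationMatrix θ - 1)
      ≤ √((Real.cos θ - 1) ^ 2 + Real.sin θ ^ 2) := hsub ▸ specNorm_conformal_le _ _
    _ ≤ √(θ ^ 2) := Real.sqrt_le_sqrt hchord
    _ = |θ| := Real.sqrt_sq_eq_abs θ

lemma exists_angle_of_sq_add_sq_eq_one {a b : ℝ} (h : a ^ 2 + b ^ 2 = 1) :
    ∃ θ, |θ| ≤ Real.pi ∧ Real.cos θ = a ∧ Real.sin θ = b := by
  have hz : ‖(⟨a, b⟩ : ℂ)‖ = 1 := by
    rw [Complex.norm_def, Complex.normSq_mk, ← sq, ← sq, h, Real.sqrt_one]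
  refine ⟨Complex.arg ⟨a, b⟩, Complex.abs_arg_le_pi _, ?_, ?_⟩
  · rw [Complex.cos_arg (norm_ne_zero_iff.mp (hz ▸ one_ne_zero)), hz, div_one]
  · rw [Complex.sin_arg, hz, div_one]

lemma det_eq_one_or_neg_one_of_transpose_mul_self {R n : Type*} [CommRing R] [NoZeroDivisors R]
    [Fintype n] [DecidableEq n] {Q : Matrix n n R} (hQ : Qᵀ * Q = 1) :
    Q.det = 1 ∨ Q.det = -1 := by
  apply mul_self_eq_one_iff.mp
  simpa [det_transpose] using congrArg det hQ

lemma exists_eq_rotationMatrix_mul_of_transpose_mul_self {Q : Matrix (Fin 2) (Fin 2) ℝ}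
    (hQ : Qᵀ * Q = 1) :
    ∃ θ, |θ| ≤ Real.pi ∧ Q = rotationMatrix θ * diagonal ![1, Q.det] := by
  have hcol : Q 0 0 ^ 2 + Q 1 0 ^ 2 = 1 := by
    simpa [mul_apply, Fin.sum_univ_two, sq] using congrFun (congrFun hQ 0) 0
  have horth : Q 0 0 * Q 0 1 + Q 1 0 * Q 1 1 = 0 := by
    simpa [mul_apply, Fin.sum_univ_two] using congrFun (congrFun hQ 0) 1
  have h01 : Q 0 1 = -Q.det * Q 1 0 := by
    rw [det_fin_two]; linear_combination (-Q 0 1) * hcol + Q 0 0 * horth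
  have h11 : Q 1 1 = Q.det * Q 0 0 := by
    rw [det_fin_two]; linear_combination (-Q 1 1) * hcol + Q 1 0 * horth
  obtain ⟨θ, hθ, hcos, hsin⟩ := exists_angle_of_sq_add_sq_eq_one hcol
  refine ⟨θ, hθ, ?_⟩
  ext i j; fin_cases i <;> fin_cases j <;> simp [rotationMatrix, hcos, hsin, h01, h11, mul_comm]

/-- Any 2×2 orthogonal matrix `Q` factors as `W_1 ⋯ W_q Λ` with each
`‖W_j − I‖ ≤ π/q`, where `Λ` is diagonal with `±1` entries; if `Q` is a
rotation then `Λ` can be taken to be the identity. -/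
theorem orthogonal_factorization (Q : Matrix (Fin 2) (Fin 2) ℝ)
    (hQ : Qᵀ * Q = 1) (q : ℕ) (hq : 0 < q) :
    ∃ (W : Fin q → Matrix (Fin 2) (Fin 2) ℝ) (Λ : Matrix (Fin 2) (Fin 2) ℝ),
      (∀ j, specNorm (W j - 1) ≤ Real.pi / q) ∧
      (∀ i j, i ≠ j → Λ i j = 0) ∧
      (∀ i, Λ i i = 1 ∨ Λ i i = -1) ∧
      Q = (List.ofFn W).prod * Λ ∧
      (Q.det = 1 → Λ = 1) := by
  obtain ⟨θ, hθ, hQθ⟩ := exists_eq_rotationMatrix_mul_of_transpose_mul_self hQ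
  have hq' : (q : ℝ) ≠ 0 := by positivity
  refine ⟨fun _ => rotationMatrix (θ / q), diagonal ![1, Q.det], fun _ => ?_,
    fun i j hij => diagonal_apply_ne _ hij, ?_, ?_, ?_⟩
  · calc specNorm (rotationMatrix (θ / q) - 1) ≤ |θ / q| := specNorm_rotationMatrix_sub_one_le _
      _ ≤ Real.pi / q := by rw [abs_div, Nat.abs_cast]; gcongr
  · intro i
    fin_cases i
    · simp
    · simpa using det_eq_one_or_neg_one_of_transpose_mul_self hQ
  · rwa [List.ofFn_const, List.prod_replicate, ← rotationMatrix_nsmul, nsmul_eq_mul,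
      mul_div_cancel₀ θ hq']
  · intro hdet
    rw [hdet]
    ext i j; fin_cases i <;> fin_cases j <;> simp
end

section
/- Let Σ ∈ R^{d×d} be symmetric positive definite, R ∈ R^{d×d}, and let 0 ≤ τ < 1. Define f(A_1,…,A_ℓ) = ‖((I+A_ℓ)⋯(I+A_1) − R) Σ^{1/2}‖_F². Suppose ‖A_i‖ ≤ τ for every i (spectral norm). Then the squared Frobenius norm of the full gradient of f satisfies ‖∇f(A)‖_F² ≥ 4ℓ (1−τ)^{2(ℓ−1)} σ_min(Σ) (f(A) − C_opt), where C_opt = min over all A' of f(A'). In particular C_opt = 0 here, so ‖∇f(A)‖_F² ≥ 4ℓ (1−τ)^{2(ℓ−1)} σ_min(Σ) f(A). -/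
open Matrix

/-- `(I + A_{ℓ-1}) ⋯ (I + A_0)`, the residual product. -/
noncomputable def resProd {d ℓ : ℕ} (A : Fin ℓ → Matrix (Fin d) (Fin d) ℝ) :
    Matrix (Fin d) (Fin d) ℝ :=
  (List.ofFn fun i => 1 + A i).reverse.prod

attribute [local instance] Matrix.frobeniusNormedAddCommGroup Matrix.frobeniusNormedSpace

/-!
Write `E = ((I+A_ℓ)⋯(I+A_1) - R) Σ^{1/2}`, and for a layer `i` let `L` and `M` be the products
of the factors `I + A_j` above and below it. As a function of `A_i` alone, `f` is
`X ↦ ‖L X (M Σ^{1/2}) + C‖²` for a constant `C`, so its gradient at `A_i` is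
`2 Lᵀ E (M Σ^{1/2})ᵀ`. Every factor satisfies `‖(I + A_j) x‖ ≥ (1 - τ) ‖x‖`, and
`‖Σ^{1/2} x‖ ≥ m ‖x‖` where `m` is the least eigenvalue of `Σ^{1/2}`, so that `m²` is an
eigenvalue of `Σ` and `m² ≥ σ_min(Σ)`. Such lower bounds survive multiplication inside a
Frobenius norm, from either side, hence `‖∇_i f‖² ≥ 4 (1 - τ)^{2(ℓ-1)} σ_min(Σ) f(A)` for each
of the `ℓ` layers. Finally `C_opt = 0`: with `A_1 = R - I` and all other `A_j = 0` the product
is `R`.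
-/

namespace Matrix

variable {l m n k : Type*} [Fintype l] [Fintype m] [Fintype n] [Fintype k]

lemma frobenius_norm_sq_eq_sum_row (A : Matrix m n ℝ) :
    ‖A‖ ^ 2 = ∑ i, ‖(WithLp.toLp 2 (A i) : EuclideanSpace ℝ n)‖ ^ 2 :=
  PiLp.norm_sq_eq_of_L2 _ (WithLp.toLp 2 fun i => WithLp.toLp 2 (A i))

lemma frobenius_norm_sq_eq_sum (A : Matrix m n ℝ) : ‖A‖ ^ 2 = ∑ i, ∑ j, A i j ^ 2 := by
  simp [frobenius_norm_sq_eq_sum_row, EuclideanSpace.norm_sq_eq]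

lemma trace_transpose_mul_eq_sum (A B : Matrix m n ℝ) :
    trace (Aᵀ * B) = ∑ i, ∑ j, A i j * B i j := by
  simp only [trace, diag, mul_apply, transpose_apply]
  exact Finset.sum_comm

lemma fderiv_norm_sq_mul_mul_add_apply (L : Matrix l m ℝ) (N : Matrix n k ℝ) (C : Matrix l k ℝ)
    (X₀ Δ : Matrix m n ℝ) :
    fderiv ℝ (fun X : Matrix m n ℝ => ‖L * X * N + C‖ ^ 2) X₀ Δ =
      2 * trace ((L * X₀ * N + C)ᵀ * (L * Δ * N)) := by
  let T : Matrix m n ℝ →L[ℝ] Matrix l k ℝ := LinearMap.toContinuousLinearMap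
    { toFun := fun X => L * X * N
      map_add' := fun X Y => by simp [Matrix.mul_add, Matrix.add_mul]
      map_smul' := fun c X => by simp }
  have hentry : ∀ p q, HasFDerivAt (fun X => (L * X * N + C) p q)
      ((entryLinearMap ℝ ℝ p q).toContinuousLinearMap.comp T) X₀ := fun p q =>
    (((entryLinearMap ℝ ℝ p q).toContinuousLinearMap.comp T).hasFDerivAt (x := X₀)).add_const _
  -- `rfl` identifies the product topology on matrices, used in the type of `T`, with the
  -- Frobenius one, used by `HasFDerivAt`.
  have hsum : HasFDerivAt (fun X : Matrix m n ℝ => ∑ p, ∑ q, (L * X * N + C) p q ^ 2)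
      (∑ p, ∑ q, (2 * (L * X₀ * N + C) p q) •
        (entryLinearMap ℝ ℝ p q).toContinuousLinearMap.comp T) X₀ :=
    HasFDerivAt.fun_sum fun p _ => HasFDerivAt.fun_sum fun q _ =>
      ((hentry p q).pow 2).congr_fderiv (by simp [mul_add]; rfl)
  have hnorm := hsum.congr_of_eventuallyEq (f₁ := fun X : Matrix m n ℝ => ‖L * X * N + C‖ ^ 2)
    (.of_forall fun X => frobenius_norm_sq_eq_sum _)
  rw [hnorm.fderiv]
  simp only [_root_.sum_apply, _root_.smul_apply, ContinuousLinearMap.comp_apply,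
    LinearMap.coe_toContinuousLinearMap', entryLinearMap_apply, T, LinearMap.coe_mk,
    AddHom.coe_mk, trace_transpose_mul_eq_sum, Finset.mul_sum, smul_eq_mul, mul_assoc]

lemma eq_two_smul_of_fderiv_norm_sq_mul_mul_add_eq_trace {L : Matrix l m ℝ} {N : Matrix n k ℝ}
    {C : Matrix l k ℝ} {X₀ G : Matrix m n ℝ}
    (hG : ∀ Δ, fderiv ℝ (fun X : Matrix m n ℝ => ‖L * X * N + C‖ ^ 2) X₀ Δ = trace (Gᵀ * Δ)) :
    G = (2 : ℝ) • (Lᵀ * (L * X₀ * N + C) * Nᵀ) := by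
  rw [← transpose_inj, ext_iff_trace_mul_right]
  intro Δ
  rw [← hG, fderiv_norm_sq_mul_mul_add_apply, transpose_smul, smul_mul, trace_smul, smul_eq_mul]
  simp only [transpose_mul, transpose_transpose, Matrix.mul_assoc]
  rw [trace_mul_comm N]
  simp only [Matrix.mul_assoc]

variable [DecidableEq n]

def IsBoundedBelow (c : ℝ) (P : Matrix m n ℝ) : Prop :=
  ∀ x : EuclideanSpace ℝ n, c * ‖x‖ ≤ ‖P.toEuclideanLin x‖

lemma isBoundedBelow_one : IsBoundedBelow 1 (1 : Matrix n n ℝ) := fun x => by simp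

namespace IsBoundedBelow

variable {a b : ℝ}

lemma mul [DecidableEq m] {P : Matrix l m ℝ} {Q : Matrix m n ℝ} (hP : IsBoundedBelow a P)
    (hQ : IsBoundedBelow b Q) (ha : 0 ≤ a) : IsBoundedBelow (a * b) (P * Q) := fun x =>
  calc a * b * ‖x‖ = a * (b * ‖x‖) := mul_assoc ..
    _ ≤ a * ‖Q.toEuclideanLin x‖ := mul_le_mul_of_nonneg_left (hQ x) ha
    _ ≤ ‖(P * Q).toEuclideanLin x‖ := by
      simpa [toLpLin_apply, mulVec_mulVec] using hP (Q.toEuclideanLin x)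

lemma list_prod {L : List (Matrix n n ℝ)} (ha : 0 ≤ a) (h : ∀ P ∈ L, IsBoundedBelow a P) :
    IsBoundedBelow (a ^ L.length) L.prod := by
  induction L with
  | nil => simpa using isBoundedBelow_one
  | cons P L ih =>
    rw [List.length_cons, pow_succ', List.prod_cons]
    exact (h P List.mem_cons_self).mul (ih fun Q hQ => h Q (List.mem_cons_of_mem P hQ)) ha

lemma mul_norm_le_norm_mul_transpose {P : Matrix m n ℝ} (h : IsBoundedBelow a P) (ha : 0 ≤ a)
    (Q : Matrix l n ℝ) : a * ‖Q‖ ≤ ‖Q * Pᵀ‖ := by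
  refine le_of_sq_le_sq ?_ (norm_nonneg _)
  rw [mul_pow, frobenius_norm_sq_eq_sum_row, frobenius_norm_sq_eq_sum_row, Finset.mul_sum]
  refine Finset.sum_le_sum fun i _ => ?_
  rw [← mul_pow, mul_apply_eq_vecMul, vecMul_transpose]
  exact pow_le_pow_left₀ (by positivity) (h _) 2

lemma mul_norm_le_norm_mul {P : Matrix m n ℝ} (h : IsBoundedBelow a P) (ha : 0 ≤ a)
    (Q : Matrix n k ℝ) : a * ‖Q‖ ≤ ‖P * Q‖ := by
  rw [← frobenius_norm_transpose (P * Q), transpose_mul]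
  simpa using h.mul_norm_le_norm_mul_transpose ha Qᵀ

lemma mul_mul_norm_le_norm_mul_mul_transpose [DecidableEq m] {P : Matrix l m ℝ}
    {Q : Matrix k n ℝ} (hP : IsBoundedBelow a P) (hQ : IsBoundedBelow b Q) (ha : 0 ≤ a)
    (hb : 0 ≤ b) (X : Matrix m n ℝ) : a * b * ‖X‖ ≤ ‖P * X * Qᵀ‖ :=
  calc a * b * ‖X‖ = b * (a * ‖X‖) := by ring
    _ ≤ b * ‖P * X‖ := mul_le_mul_of_nonneg_left (hP.mul_norm_le_norm_mul ha X) hb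
    _ ≤ ‖P * X * Qᵀ‖ := hQ.mul_norm_le_norm_mul_transpose hb _

end IsBoundedBelow

end Matrix

lemma LinearMap.IsPositive.exists_hasEigenvector_forall_mul_norm_le {E : Type*}
    [NormedAddCommGroup E] [InnerProductSpace ℝ E] [FiniteDimensional ℝ E] [Nontrivial E]
    {T : E →ₗ[ℝ] E} (hT : T.IsPositive) :
    ∃ m v, 0 ≤ m ∧ Module.End.HasEigenvector T m v ∧ ∀ x, m * ‖x‖ ≤ ‖T x‖ := by
  obtain ⟨v, hv⟩ := hT.isSymmetric.hasEigenvalue_iInf_of_finiteDimensional.exists_hasEigenvector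
  set m := ⨅ x : {x : E // x ≠ 0}, RCLike.re (inner ℝ (T x) (x : E)) / ‖(x : E)‖ ^ 2
  have hquot : ∀ x : {x : E // x ≠ 0}, 0 ≤ RCLike.re (inner ℝ (T x) (x : E)) / ‖(x : E)‖ ^ 2 :=
    fun x => div_nonneg (hT.2 x) (sq_nonneg _)
  have hm : ∀ x : {x : E // x ≠ 0}, m ≤ RCLike.re (inner ℝ (T x) (x : E)) / ‖(x : E)‖ ^ 2 :=
    ciInf_le ⟨0, by rintro _ ⟨x, rfl⟩; exact hquot x⟩
  have : Nonempty {x : E // x ≠ 0} := ⟨⟨v, hv.2⟩⟩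
  refine ⟨m, v, le_ciInf hquot, hv, fun x => ?_⟩
  rcases eq_or_ne x 0 with rfl | hx
  · simp
  have hxpos : 0 < ‖x‖ := norm_pos_iff.mpr hx
  have hrayleigh : m * ‖x‖ ^ 2 ≤ inner ℝ (T x) x := (le_div_iff₀ (by positivity)).mp (hm ⟨x, hx⟩)
  have hcs : inner ℝ (T x) x ≤ ‖T x‖ * ‖x‖ := real_inner_le_norm _ _
  nlinarith

open Matrix

lemma frobNorm_eq_norm {m n : ℕ} (A : Matrix (Fin m) (Fin n) ℝ) : frobNorm A = ‖A‖ := by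
  rw [frobNorm, ← frobenius_norm_sq_eq_sum, Real.sqrt_sq (norm_nonneg A)]

section SquareMatrix

variable {d : ℕ}

lemma norm_toEuclideanLin_le_specNorm_mul (A : Matrix (Fin d) (Fin d) ℝ)
    (x : EuclideanSpace ℝ (Fin d)) : ‖A.toEuclideanLin x‖ ≤ specNorm A * ‖x‖ :=
  (LinearMap.toContinuousLinearMap A.toEuclideanLin).le_opNorm x

lemma specNorm_transpose (A : Matrix (Fin d) (Fin d) ℝ) : specNorm Aᵀ = specNorm A := by
  rw [specNorm, ← conjTranspose_eq_transpose_of_trivial, toEuclideanLin_conjTranspose_eq_adjoint,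
    LinearMap.adjoint_toContinuousLinearMap, LinearIsometryEquiv.norm_map]
  rfl

lemma isBoundedBelow_one_add {τ : ℝ} {A : Matrix (Fin d) (Fin d) ℝ} (hA : specNorm A ≤ τ) :
    IsBoundedBelow (1 - τ) (1 + A) := fun x =>
  calc (1 - τ) * ‖x‖ = ‖x‖ - τ * ‖x‖ := by ring
    _ ≤ ‖x‖ - ‖A.toEuclideanLin x‖ := by
      gcongr
      exact (norm_toEuclideanLin_le_specNorm_mul A x).trans (by gcongr)
    _ ≤ ‖x + A.toEuclideanLin x‖ := norm_sub_le_norm_add _ _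
    _ = ‖(1 + A).toEuclideanLin x‖ := by simp

lemma sigmaMin_le_abs_of_apply_eq_smul {P : Matrix (Fin d) (Fin d) ℝ} {μ : ℝ}
    {x : EuclideanSpace ℝ (Fin d)} (hx : x ≠ 0) (hPx : P.toEuclideanLin x = μ • x) :
    sigmaMin P ≤ |μ| := by
  have hx0 : ‖x‖ ≠ 0 := norm_ne_zero_iff.mpr hx
  have hunit : ‖x‖⁻¹ • x ∈ Metric.sphere (0 : EuclideanSpace ℝ (Fin d)) 1 := by
    simp [norm_smul, hx0]
  calc sigmaMin P ≤ ‖P.toEuclideanLin (‖x‖⁻¹ • x)‖ :=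
        ciInf_le ⟨0, by rintro _ ⟨y, rfl⟩; exact norm_nonneg _⟩ (⟨_, hunit⟩ : Metric.sphere _ _)
    _ = |μ| := by simp [hPx, norm_smul]; field_simp

lemma Matrix.PosSemidef.exists_isBoundedBelow_sigmaMin_mul_self_le
    {B : Matrix (Fin d) (Fin d) ℝ} (hB : B.PosSemidef) :
    ∃ m, 0 ≤ m ∧ IsBoundedBelow m B ∧ sigmaMin (B * B) ≤ m ^ 2 := by
  rcases subsingleton_or_nontrivial (EuclideanSpace ℝ (Fin d)) with hE | hE
  · have : IsEmpty (Metric.sphere (0 : EuclideanSpace ℝ (Fin d)) 1) :=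
      ⟨fun ⟨x, hx⟩ => by simp [Subsingleton.elim x 0] at hx⟩
    exact ⟨0, le_rfl, fun x => by simp, by simp [sigmaMin, Real.iInf_of_isEmpty]⟩
  obtain ⟨m, v, hm0, hv, hBm⟩ :=
    (isPositive_toEuclideanLin_iff.mpr hB).exists_hasEigenvector_forall_mul_norm_le
  have hBB : (B * B).toEuclideanLin v = m ^ 2 • v := by
    rw [toLpLin_mul_same, LinearMap.comp_apply, hv.apply_eq_smul, map_smul, hv.apply_eq_smul,
      smul_smul, sq]
  refine ⟨m, hm0, hBm, ?_⟩
  simpa [abs_of_nonneg (sq_nonneg m)] using sigmaMin_le_abs_of_apply_eq_smul hv.2 hBB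

end SquareMatrix

lemma List.ofFn_update {α : Type*} {n : ℕ} (f : Fin n → α) (i : Fin n) (a : α) :
    List.ofFn (Function.update f i a) = (List.ofFn f).set i a := by
  refine List.ext_getElem (by simp) fun k h₁ h₂ => ?_
  simp [Function.update_apply, List.getElem_set, Fin.ext_iff, eq_comm]

section ResidualProduct

variable {d ℓ : ℕ}

def resProdBelow (A : Fin ℓ → Matrix (Fin d) (Fin d) ℝ) (i : ℕ) : Matrix (Fin d) (Fin d) ℝ :=
  ((List.ofFn fun j => 1 + A j).take i).reverse.prod

def resProdAbove (A : Fin ℓ → Matrix (Fin d) (Fin d) ℝ) (i : ℕ) : Matrix (Fin d) (Fin d) ℝ :=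
  ((List.ofFn fun j => 1 + A j).drop (i + 1)).reverse.prod

lemma resProd_update (A : Fin ℓ → Matrix (Fin d) (Fin d) ℝ) (i : Fin ℓ)
    (X : Matrix (Fin d) (Fin d) ℝ) :
    resProd (Function.update A i X) = resProdAbove A i * (1 + X) * resProdBelow A i := by
  have hfactors : (fun j => 1 + Function.update A i X j) =
      Function.update (fun j => 1 + A j) i (1 + X) :=
    funext fun j => Function.apply_update (fun _ Y => 1 + Y) A i X j
  rw [resProd, hfactors, List.ofFn_update, List.set_eq_take_cons_drop _ (by simp)]
  simp [resProdAbove, resProdBelow, Matrix.mul_assoc]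

lemma resProd_update_sub_mul (A : Fin ℓ → Matrix (Fin d) (Fin d) ℝ) (i : Fin ℓ)
    (R B X : Matrix (Fin d) (Fin d) ℝ) :
    (resProd (Function.update A i X) - R) * B =
      resProdAbove A i * X * (resProdBelow A i * B) +
        (resProdAbove A i * resProdBelow A i - R) * B := by
  rw [resProd_update]
  noncomm_ring

lemma exists_resProd_eq (hℓ : 0 < ℓ) (R : Matrix (Fin d) (Fin d) ℝ) :
    ∃ A : Fin ℓ → Matrix (Fin d) (Fin d) ℝ, resProd A = R := by
  refine ⟨Function.update 0 ⟨0, hℓ⟩ (R - 1), ?_⟩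
  have hones : resProdAbove (0 : Fin ℓ → Matrix (Fin d) (Fin d) ℝ) 0 = 1 :=
    List.prod_eq_one fun P hP => by
      obtain ⟨j, rfl⟩ := List.mem_ofFn.mp (List.drop_subset _ _ (List.mem_reverse.mp hP))
      simp
  simp [resProd_update, hones, resProdBelow]

variable {τ : ℝ} {A : Fin ℓ → Matrix (Fin d) (Fin d) ℝ}

lemma isBoundedBelow_resProdBelow (hτ : τ ≤ 1) (hA : ∀ j, specNorm (A j) ≤ τ) (i : Fin ℓ) :
    IsBoundedBelow ((1 - τ) ^ (i : ℕ)) (resProdBelow A i) := by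
  have := IsBoundedBelow.list_prod (sub_nonneg.mpr hτ)
    (L := ((List.ofFn fun j => 1 + A j).take i).reverse) fun P hP => by
      obtain ⟨j, rfl⟩ := List.mem_ofFn.mp (List.take_subset _ _ (List.mem_reverse.mp hP))
      exact isBoundedBelow_one_add (hA j)
  simpa [resProdBelow, i.2.le] using this

lemma isBoundedBelow_transpose_resProdAbove (hτ : τ ≤ 1) (hA : ∀ j, specNorm (A j) ≤ τ)
    (i : Fin ℓ) : IsBoundedBelow ((1 - τ) ^ (ℓ - (i + 1))) (resProdAbove A i)ᵀ := by
  have := IsBoundedBelow.list_prod (sub_nonneg.mpr hτ)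
    (L := ((List.ofFn fun j => 1 + A j).drop (i + 1)).map transpose) fun P hP => by
      obtain ⟨Q, hQ, rfl⟩ := List.mem_map.mp hP
      obtain ⟨j, rfl⟩ := List.mem_ofFn.mp (List.drop_subset _ _ hQ)
      rw [transpose_add, transpose_one]
      exact isBoundedBelow_one_add ((specNorm_transpose _).trans_le (hA j))
  rw [resProdAbove, transpose_list_prod]
  simpa using this

lemma le_norm_of_fderiv_residual_eq_trace (hτ : τ ≤ 1) (hA : ∀ j, specNorm (A j) ≤ τ)
    {R B : Matrix (Fin d) (Fin d) ℝ} {m : ℝ} (hm : 0 ≤ m) (hB : IsBoundedBelow m B) (i : Fin ℓ)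
    {G : Matrix (Fin d) (Fin d) ℝ}
    (hG : ∀ Δ, fderiv ℝ (fun X => ‖(resProd (Function.update A i X) - R) * B‖ ^ 2) (A i) Δ =
      trace (Gᵀ * Δ)) :
    2 * ((1 - τ) ^ (ℓ - 1) * m * ‖(resProd A - R) * B‖) ≤ ‖G‖ := by
  have hE := resProd_update_sub_mul A i R B (A i)
  rw [Function.update_eq_self] at hE
  have hGi : G = (2 : ℝ) • ((resProdAbove A i)ᵀ * ((resProd A - R) * B) *
      (resProdBelow A i * B)ᵀ) := by
    rw [hE]
    exact eq_two_smul_of_fderiv_norm_sq_mul_mul_add_eq_trace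
      fun Δ => by simpa only [resProd_update_sub_mul] using hG Δ
  have hc : 0 ≤ 1 - τ := sub_nonneg.mpr hτ
  have hexp : (1 - τ) ^ (ℓ - (i + 1)) * ((1 - τ) ^ (i : ℕ) * m) = (1 - τ) ^ (ℓ - 1) * m := by
    rw [← mul_assoc, ← pow_add]
    congr 3
    omega
  rw [hGi, norm_smul, Real.norm_two, ← hexp]
  gcongr
  exact (isBoundedBelow_transpose_resProdAbove hτ hA i).mul_mul_norm_le_norm_mul_mul_transpose
    ((isBoundedBelow_resProdBelow hτ hA i).mul hB (pow_nonneg hc _))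
    (pow_nonneg hc _) (mul_nonneg (pow_nonneg hc _) hm) _

end ResidualProduct

theorem gradient_lower_bound_general {d ℓ : ℕ} (hℓ : 0 < ℓ)
    (R Sg B : Matrix (Fin d) (Fin d) ℝ)
    (hB : B.PosSemidef) (hBsq : B * B = Sg)
    (τ : ℝ) (hτ : τ < 1)
    (f : (Fin ℓ → Matrix (Fin d) (Fin d) ℝ) → ℝ)
    (hf : ∀ A', f A' = (frobNorm ((resProd A' - R) * B)) ^ 2)
    (A : Fin ℓ → Matrix (Fin d) (Fin d) ℝ)
    (hA : ∀ i, specNorm (A i) ≤ τ)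
    (G : Fin ℓ → Matrix (Fin d) (Fin d) ℝ)
    (hG : ∀ i, ∀ Δ : Matrix (Fin d) (Fin d) ℝ,
      fderiv ℝ (fun X => f (Function.update A i X)) (A i) Δ =
        Matrix.trace ((G i)ᵀ * Δ))
    (Copt : ℝ) (hCopt : IsGLB (Set.range f) Copt) :
    Copt = 0 ∧
    4 * ℓ * (1 - τ) ^ (2 * (ℓ - 1)) * sigmaMin Sg * (f A - Copt) ≤
      ∑ i, (frobNorm (G i)) ^ 2 := by
  obtain rfl : f = fun A' => ‖(resProd A' - R) * B‖ ^ 2 :=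
    funext fun A' => by rw [hf, frobNorm_eq_norm]
  have hCopt0 : Copt = 0 := by
    obtain ⟨A₀, hA₀⟩ := exists_resProd_eq hℓ R
    refine hCopt.unique (IsLeast.isGLB ⟨⟨A₀, by simp [hA₀]⟩, ?_⟩)
    rintro _ ⟨A', rfl⟩
    positivity
  obtain ⟨m, hm0, hBm, hSgm⟩ := hB.exists_isBoundedBelow_sigmaMin_mul_self_le
  rw [hBsq] at hSgm
  set E := (resProd A - R) * B
  refine ⟨hCopt0, ?_⟩
  calc 4 * ℓ * (1 - τ) ^ (2 * (ℓ - 1)) * sigmaMin Sg * (‖E‖ ^ 2 - Copt)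
      ≤ ∑ _i : Fin ℓ, (2 * ((1 - τ) ^ (ℓ - 1) * m * ‖E‖)) ^ 2 := by
        rw [hCopt0, sub_zero, Finset.sum_const, Finset.card_univ, Fintype.card_fin,
          nsmul_eq_mul, pow_mul']
        have : 0 ≤ 4 * ℓ * ((1 - τ) ^ (ℓ - 1)) ^ 2 * ‖E‖ ^ 2 := by positivity
        nlinarith
    _ ≤ ∑ i, frobNorm (G i) ^ 2 := Finset.sum_le_sum fun i _ => by
        rw [frobNorm_eq_norm]
        exact pow_le_pow_left₀ (by positivity)
          (le_norm_of_fderiv_residual_eq_trace hτ.le hA hm0 hBm i (hG i)) 2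

/-- Equation (10): the gradient bound
`‖∇f(A)‖_F² ≥ 4ℓ(1−τ)^{2(ℓ−1)} σ_min(Σ) (f(A) − C_opt)` for
`f(A) = ‖((I+A_ℓ)⋯(I+A_1) − R)Σ^{1/2}‖_F²` on the ball `‖A_i‖ ≤ τ < 1`;
moreover `C_opt = 0`. Here the partial gradients `G i` are specified through
the Fréchet derivative of the corresponding slice function. -/
theorem gradient_lower_bound {d ℓ : ℕ} (hℓ : 0 < ℓ)
    (R Sg B : Matrix (Fin d) (Fin d) ℝ)
    (hSg : Sg.PosDef) (hB : B.PosSemidef) (hBsq : B * B = Sg)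
    (τ : ℝ) (hτ0 : 0 ≤ τ) (hτ : τ < 1)
    (f : (Fin ℓ → Matrix (Fin d) (Fin d) ℝ) → ℝ)
    (hf : ∀ A', f A' = (frobNorm ((resProd A' - R) * B)) ^ 2)
    (A : Fin ℓ → Matrix (Fin d) (Fin d) ℝ)
    (hA : ∀ i, specNorm (A i) ≤ τ)
    (G : Fin ℓ → Matrix (Fin d) (Fin d) ℝ)
    (hG : ∀ i, ∀ Δ : Matrix (Fin d) (Fin d) ℝ,
      fderiv ℝ (fun X => f (Function.update A i X)) (A i) Δ =
        Matrix.trace ((G i)ᵀ * Δ))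
    (Copt : ℝ) (hCopt : IsGLB (Set.range f) Copt) :
    Copt = 0 ∧
    4 * ℓ * (1 - τ) ^ (2 * (ℓ - 1)) * sigmaMin Sg * (f A - Copt) ≤
      ∑ i, (frobNorm (G i)) ^ 2 :=
  gradient_lower_bound_general hℓ R Sg B hB hBsq τ hτ f hf A hA G hG Copt hCopt
end

section
/- Let α^{(1)}, …, α^{(n)} ∈ R^k and let S ⊆ {1,…,n} with |S| = k, and let ρ' > 0. Assume (a) 1 − ρ' ≤ ‖α^{(i)}‖² ≤ 1 + ρ' for all i, and (b) whenever i ≠ j and at least one of i, j lies in S, ‖α^{(i)} − α^{(j)}‖² ≥ 3ρ'. Let β^{(i)} ∈ R^k for i ∈ S be arbitrary. Then there exist U ∈ R^{k×k}, V ∈ R^{k×k}, and s ∈ R^k such that the map T(h) = V ReLU(U h + s) satisfies T(α^{(i)}) = β^{(i)} − α^{(i)} for every i ∈ S, and T(α^{(i)}) = 0 for every i ∉ S. -/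
/-!
Index `S` by `Fin k` through a bijection `e` and let hidden unit `j` have weights `α (e j)` and
bias `ρ'/4 - ‖α (e j)‖²`. Its preactivation at `x` is `ρ'/4 + ⟨α (e j), x⟩ - ‖α (e j)‖²`: this is
`ρ'/4` at `x = α (e j)`, and by polarization, `2(⟨a, b⟩ - ‖a‖²) = ‖b‖² - ‖a‖² - ‖a - b‖²`, the norm
and separation bounds make it at most `-ρ'/4` at every other `α i`. So the hidden ReLU layer is
`(ρ'/4)` times the indicator of the unit of `i` for `i ∈ S`, and zero for `i ∉ S`, and an output
layer with columns `(4/ρ') (β - α) (e j)` reads off the targets.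
-/

open Matrix

section

variable {d m : Type*} [Fintype d]

theorem dotProduct_sub_dotProduct_self (a b : d → ℝ) :
    a ⬝ᵥ b - a ⬝ᵥ a = (b ⬝ᵥ b - a ⬝ᵥ a - (a - b) ⬝ᵥ (a - b)) / 2 := by
  simp only [sub_dotProduct, dotProduct_sub, dotProduct_comm b a]
  ring

theorem dotProduct_sub_dotProduct_self_le_of_separated {ρ : ℝ} {a b : d → ℝ}
    (ha : 1 - ρ ≤ a ⬝ᵥ a) (hb : b ⬝ᵥ b ≤ 1 + ρ) (hab : 3 * ρ ≤ (a - b) ⬝ᵥ (a - b)) :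
    a ⬝ᵥ b - a ⬝ᵥ a ≤ -(ρ / 2) := by
  rw [dotProduct_sub_dotProduct_self]
  linarith

theorem posPart_eq_single [DecidableEq m] {z : m → ℝ} {j₀ : m} (hz : 0 ≤ z j₀)
    (hneg : ∀ j ≠ j₀, z j ≤ 0) : z⁺ = Pi.single j₀ (z j₀) := by
  funext j
  rw [Pi.posPart_apply]
  rcases eq_or_ne j j₀ with rfl | hj
  · rw [Pi.single_eq_same, posPart_eq_self.2 hz]
  · rw [Pi.single_eq_of_ne hj, posPart_of_nonpos (hneg j hj)]

noncomputable def selectorBias (ρ : ℝ) (γ : m → d → ℝ) : m → ℝ := fun j => ρ / 4 - γ j ⬝ᵥ γ j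

theorem of_mulVec_add_selectorBias_apply (ρ : ℝ) (γ : m → d → ℝ) (x : d → ℝ) (j : m) :
    (of γ *ᵥ x + selectorBias ρ γ) j = ρ / 4 + (γ j ⬝ᵥ x - γ j ⬝ᵥ γ j) := by
  change γ j ⬝ᵥ x + (ρ / 4 - γ j ⬝ᵥ γ j) = _
  ring

variable {ρ : ℝ} {γ : m → d → ℝ} {x : d → ℝ}

theorem of_mulVec_add_selectorBias_nonpos (hρ : 0 ≤ ρ) (hγ : ∀ j, 1 - ρ ≤ γ j ⬝ᵥ γ j)
    (hx : x ⬝ᵥ x ≤ 1 + ρ) {j : m} (hsep : 3 * ρ ≤ (γ j - x) ⬝ᵥ (γ j - x)) :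
    (of γ *ᵥ x + selectorBias ρ γ) j ≤ 0 := by
  have hcross := dotProduct_sub_dotProduct_self_le_of_separated (hγ j) hx hsep
  rw [of_mulVec_add_selectorBias_apply]
  linarith

theorem posPart_selector_eq_single [DecidableEq m] (hρ : 0 ≤ ρ)
    (hγ : ∀ j, 1 - ρ ≤ γ j ⬝ᵥ γ j) (hx : x ⬝ᵥ x ≤ 1 + ρ) {j₀ : m} (hx₀ : γ j₀ = x)
    (hsep : ∀ j ≠ j₀, 3 * ρ ≤ (γ j - x) ⬝ᵥ (γ j - x)) :
    (of γ *ᵥ x + selectorBias ρ γ)⁺ = Pi.single j₀ (ρ / 4) := by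
  have hz₀ : (of γ *ᵥ x + selectorBias ρ γ) j₀ = ρ / 4 := by
    rw [of_mulVec_add_selectorBias_apply, hx₀, sub_self, add_zero]
  rw [← hz₀]
  exact posPart_eq_single (by linarith)
    fun j hj => of_mulVec_add_selectorBias_nonpos hρ hγ hx (hsep j hj)

theorem posPart_selector_eq_zero (hρ : 0 ≤ ρ) (hγ : ∀ j, 1 - ρ ≤ γ j ⬝ᵥ γ j)
    (hx : x ⬝ᵥ x ≤ 1 + ρ)
    (hsep : ∀ j, 3 * ρ ≤ (γ j - x) ⬝ᵥ (γ j - x)) :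
    (of γ *ᵥ x + selectorBias ρ γ)⁺ = 0 :=
  posPart_of_nonpos fun j => of_mulVec_add_selectorBias_nonpos hρ hγ hx (hsep j)

end

/-- Lemma B.1 (building block): given vectors `α⁽¹⁾, …, α⁽ⁿ⁾ ∈ ℝᵏ` with norms
close to `1` and pairwise separation involving a subset `S` of size `k`, and
arbitrary targets `β⁽ⁱ⁾` for `i ∈ S`, there are `U, V ∈ ℝ^{k×k}` and `s ∈ ℝᵏ`
such that `T(h) = V ReLU(U h + s)` maps `α⁽ⁱ⁾` to `β⁽ⁱ⁾ − α⁽ⁱ⁾` for `i ∈ S`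
and to `0` for `i ∉ S`. -/
theorem residual_block_construction {n k : ℕ} (ρ' : ℝ) (hρ : 0 < ρ')
    (α β : Fin n → Fin k → ℝ) (S : Finset (Fin n)) (hS : S.card = k)
    (hnorm : ∀ i, 1 - ρ' ≤ α i ⬝ᵥ α i ∧ α i ⬝ᵥ α i ≤ 1 + ρ')
    (hsep : ∀ i j, i ≠ j → (i ∈ S ∨ j ∈ S) →
      3 * ρ' ≤ (α i - α j) ⬝ᵥ (α i - α j)) :
    ∃ (U V : Matrix (Fin k) (Fin k) ℝ) (s : Fin k → ℝ),
      (∀ i ∈ S,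
        V.mulVec (fun j => max (U.mulVec (α i) j + s j) 0) = β i - α i) ∧
      (∀ i ∉ S,
        V.mulVec (fun j => max (U.mulVec (α i) j + s j) 0) = 0) := by
  let e : Fin k ≃ S := (S.equivFinOfCardEq hS).symm
  let γ : Fin k → Fin k → ℝ := fun j => α (e j)
  have hγ : ∀ j, 1 - ρ' ≤ γ j ⬝ᵥ γ j := fun j => (hnorm (e j)).1
  have hsepγ : ∀ i j, (e j : Fin n) ≠ i → 3 * ρ' ≤ (γ j - α i) ⬝ᵥ (γ j - α i) :=
    fun i j hne => hsep _ _ hne (.inl (e j).2)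
  refine ⟨of γ, of fun j' j => 4 / ρ' * (β (e j) j' - γ j j'), selectorBias ρ' γ,
    fun i hi => ?_, fun i hi => ?_⟩
  · obtain ⟨j₀, hj₀⟩ := e.surjective ⟨i, hi⟩
    have hi₀ : (e j₀ : Fin n) = i := by rw [hj₀]
    change _ *ᵥ (of γ *ᵥ α i + selectorBias ρ' γ)⁺ = _
    rw [posPart_selector_eq_single hρ.le hγ (hnorm i).2 (congrArg α hi₀)
      fun j hj => hsepγ i j fun h => hj (e.injective (Subtype.ext (h.trans hi₀.symm)))]
    funext j'
    rw [mulVec, dotProduct_single]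
    change 4 / ρ' * (β (e j₀) j' - α (e j₀) j') * (ρ' / 4) = β i j' - α i j'
    rw [hi₀]
    field_simp
  · change _ *ᵥ (of γ *ᵥ α i + selectorBias ρ' γ)⁺ = _
    rw [posPart_selector_eq_zero hρ.le hγ (hnorm i).2
      fun j => hsepγ i j fun h => hi (h ▸ (e j).2), mulVec_zero]
end

section
/- Let Λ ∈ R^{d×d} be a diagonal matrix with all diagonal entries in {−1, +1} and det(Λ) = 1. Then for every positive integer q there exist matrices W'_1, …, W'_q ∈ R^{d×d} with ‖W'_j − I‖ ≤ π/q for all j and Λ = W'_1 ⋯ W'_q. -/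
/-!
Split the coordinates where `Λ` is `-1` (an even number of them) into pairs and let `J` act on
each pair as the rotation by `π/2`, so that `J² = -P` for the coordinate projection `P` onto
those coordinates. Then `θ ↦ 1 + (cos θ - 1) P + (sin θ) J` is a one-parameter group with value
`1 - 2P = Λ` at `θ = π`, so `Λ` is the `q`-th power of its value at `π/q`. Since `J` is skew,
that value `W` satisfies `(W - 1)ᴴ (W - 1) = (2 - 2 cos θ) P`, and the C⋆-identity gives
`‖W - 1‖² ≤ 2 - 2 cos θ ≤ θ²`.
-/

open Matrix

/-- `J` is a complex structure on the corner `P * A * P`, whose unit is `P`. -/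
structure IsComplexStructure {A : Type*} [Mul A] [Neg A] (P J : A) : Prop where
  proj_mul_proj : P * P = P
  proj_mul : P * J = J
  mul_proj : J * P = J
  mul_self : J * J = -P

/-- `exp (θ • J)`: the rotation by `θ` on the range of `P` and the identity off it. -/
noncomputable def cornerRotation {A : Type*} [Ring A] [Algebra ℝ A] (P J : A) (θ : ℝ) : A :=
  1 + (Real.cos θ - 1) • P + Real.sin θ • J

theorem cornerRotation_sub_one {A : Type*} [Ring A] [Algebra ℝ A] (P J : A) (θ : ℝ) :
    cornerRotation P J θ - 1 = (Real.cos θ - 1) • P + Real.sin θ • J := by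
  rw [cornerRotation, add_assoc, add_sub_cancel_left]

theorem cornerRotation_pi {A : Type*} [Ring A] [Algebra ℝ A] (P J : A) :
    cornerRotation P J Real.pi = 1 - (2 : ℝ) • P := by
  simp only [cornerRotation, Real.cos_pi, Real.sin_pi, zero_smul, add_zero]
  module

namespace IsComplexStructure

theorem map {A B F : Type*} [NonUnitalNonAssocRing A] [NonUnitalNonAssocRing B]
    [FunLike F A B] [NonUnitalRingHomClass F A B] (f : F) {P J : A}
    (h : IsComplexStructure P J) : IsComplexStructure (f P) (f J) where
  proj_mul_proj := by rw [← map_mul, h.proj_mul_proj]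
  proj_mul := by rw [← map_mul, h.proj_mul]
  mul_proj := by rw [← map_mul, h.mul_proj]
  mul_self := by rw [← map_mul, h.mul_self, map_neg]

section Rotation

variable {A : Type*} [Ring A] [Algebra ℝ A] {P J : A}

theorem cornerRotation_add (h : IsComplexStructure P J) (a b : ℝ) :
    cornerRotation P J (a + b) = cornerRotation P J a * cornerRotation P J b := by
  simp only [cornerRotation, add_mul, mul_add, one_mul, mul_one, smul_mul_smul_comm,
    h.proj_mul_proj, h.proj_mul, h.mul_proj, h.mul_self, Real.cos_add, Real.sin_add]
  module

theorem cornerRotation_pow (h : IsComplexStructure P J) (θ : ℝ) (n : ℕ) :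
    cornerRotation P J θ ^ n = cornerRotation P J (n * θ) := by
  induction n with
  | zero => simp [cornerRotation]
  | succ n ih => rw [pow_succ, ih, ← h.cornerRotation_add, Nat.cast_succ, add_one_mul]

end Rotation

theorem norm_cornerRotation_sub_one_le {A : Type*} [NormedRing A] [StarRing A] [CStarRing A]
    [NormedAlgebra ℝ A] [StarModule ℝ A] {P J : A} (h : IsComplexStructure P J)
    (hP : IsSelfAdjoint P) (hJ : star J = -J) (θ : ℝ) :
    ‖cornerRotation P J θ - 1‖ ≤ |θ| := by
  have hstar : star (cornerRotation P J θ - 1) * (cornerRotation P J θ - 1)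
      = (2 - 2 * Real.cos θ) • P := by
    simp only [cornerRotation_sub_one, star_add, star_smul, star_trivial, hP.star_eq, hJ, add_mul,
      mul_add, smul_mul_smul_comm, h.proj_mul_proj, h.proj_mul, h.mul_proj, neg_mul, h.mul_self]
    linear_combination (norm := module) Real.sin_sq_add_cos_sq θ • P
  have hcos : 0 ≤ 2 - 2 * Real.cos θ := by linarith [Real.cos_le_one θ]
  have hsq : ‖cornerRotation P J θ - 1‖ ^ 2 ≤ θ ^ 2 := by
    rw [sq, ← CStarRing.norm_star_mul_self, hstar, norm_smul, Real.norm_of_nonneg hcos]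
    calc (2 - 2 * Real.cos θ) * ‖P‖ ≤ 2 - 2 * Real.cos θ :=
          mul_le_of_le_one_right hcos (IsStarProjection.norm_le P ⟨h.proj_mul_proj, hP⟩)
      _ ≤ θ ^ 2 := by linarith [Real.one_sub_sq_div_two_le_cos (x := θ)]
  simpa using sq_le_sq.1 hsq

end IsComplexStructure

theorem isComplexStructure_fromBlocks_one {ι α : Type*} [Fintype ι] [DecidableEq ι] [Ring α] :
    IsComplexStructure (1 : Matrix (ι ⊕ ι) (ι ⊕ ι) α) (fromBlocks 0 1 (-1) 0) where
  proj_mul_proj := mul_one 1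
  proj_mul := one_mul _
  mul_proj := mul_one _
  mul_self := by simp [fromBlocks_multiply, fromBlocks_neg, ← fromBlocks_one]

theorem IsComplexStructure.fromBlocks {ι κ α : Type*} [Fintype ι] [Fintype κ] [Ring α]
    {P J : Matrix ι ι α} (h : IsComplexStructure P J) :
    IsComplexStructure (fromBlocks P 0 0 (0 : Matrix κ κ α)) (fromBlocks J 0 0 0) where
  proj_mul_proj := by simp [fromBlocks_multiply, h.proj_mul_proj]
  proj_mul := by simp [fromBlocks_multiply, h.proj_mul]
  mul_proj := by simp [fromBlocks_multiply, h.mul_proj]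
  mul_self := by simp [fromBlocks_multiply, h.mul_self, fromBlocks_neg]

theorem exists_isComplexStructure_diagonal {n : Type*} [Fintype n] [DecidableEq n] (S : Finset n)
    (hS : Even S.card) : ∃ J : Matrix n n ℝ, star J = -J ∧
      IsComplexStructure (diagonal fun i => if i ∈ S then (1 : ℝ) else 0) J := by
  obtain ⟨m, hm⟩ := hS
  let e : n ≃ (Fin m ⊕ Fin m) ⊕ {i // i ∉ S} := (Equiv.sumCompl (· ∈ S)).symm.trans
    (Equiv.sumCongr (S.equivFin.trans ((finCongr hm).trans finSumFinEquiv.symm)) (Equiv.refl _))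
  let f := reindexAlgEquiv ℝ ℝ e.symm
  refine ⟨f (fromBlocks (fromBlocks 0 1 (-1) 0) 0 0 0), ?_, ?_⟩
  · rw [← map_neg, coe_reindexAlgEquiv, star_eq_conjTranspose, conjTranspose_reindex]
    congr 1
    simp [fromBlocks_transpose, fromBlocks_neg]
  · have hP : f (fromBlocks 1 0 0 0) = diagonal fun i => if i ∈ S then (1 : ℝ) else 0 := by
      have h1 : (fromBlocks 1 0 0 0 : Matrix ((Fin m ⊕ Fin m) ⊕ {i // i ∉ S}) _ ℝ) =
          diagonal (Sum.elim 1 0) := by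
        rw [← diagonal_one, ← diagonal_zero, fromBlocks_diagonal]
        rfl
      rw [coe_reindexAlgEquiv, reindex_apply, Equiv.symm_symm, h1, submatrix_diagonal_equiv]
      congr 1
      ext i
      by_cases hi : i ∈ S <;>
        simp [e, hi, Equiv.sumCompl_symm_apply_of_pos, Equiv.sumCompl_symm_apply_of_neg]
    simpa only [hP] using isComplexStructure_fromBlocks_one.fromBlocks.map f

theorem exists_isComplexStructure_of_isDiag_of_det_eq_one {n : Type*} [Fintype n] [DecidableEq n]
    {Λ : Matrix n n ℝ} (hdiag : Λ.IsDiag) (hpm : ∀ i, Λ i i = 1 ∨ Λ i i = -1) (hdet : Λ.det = 1) :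
    ∃ P J : Matrix n n ℝ, IsSelfAdjoint P ∧ star J = -J ∧ IsComplexStructure P J ∧
      Λ = 1 - (2 : ℝ) • P := by
  set S := Finset.univ.filter fun i => Λ i i = -1
  have hΛ : Λ = diagonal fun i => if i ∈ S then -1 else 1 := by
    ext i j
    rcases eq_or_ne i j with rfl | hij
    · rcases hpm i with h | h <;> simp [S, h]
    · simp [hdiag hij, hij]
  have hS : Even S.card := by
    rw [hΛ, det_diagonal, Finset.prod_ite_mem, Finset.univ_inter, Finset.prod_const] at hdet
    exact (neg_one_pow_eq_one_iff_even (by norm_num)).1 hdet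
  obtain ⟨J, hJ, hPJ⟩ := exists_isComplexStructure_diagonal S hS
  refine ⟨_, J, (isHermitian_diagonal _).isSelfAdjoint, hJ, hPJ, ?_⟩
  ext i j
  rw [hΛ, Matrix.sub_apply, Matrix.smul_apply, diagonal_apply, diagonal_apply, one_apply]
  rcases eq_or_ne i j with rfl | hij
  · by_cases hi : i ∈ S <;> norm_num [hi]
  · simp [hij]

open scoped Matrix.Norms.L2Operator in
theorem specNorm_eq_l2_opNorm {d : ℕ} (A : Matrix (Fin d) (Fin d) ℝ) : specNorm A = ‖A‖ := rfl

/-- A diagonal `±1` matrix `Λ` with `det Λ = 1` factors as a product of `q`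
matrices each within spectral distance `π/q` of the identity. -/
theorem diag_pm_one_factorization {d : ℕ} (Λ : Matrix (Fin d) (Fin d) ℝ)
    (hdiag : ∀ i j, i ≠ j → Λ i j = 0)
    (hpm : ∀ i, Λ i i = 1 ∨ Λ i i = -1)
    (hdet : Λ.det = 1) (q : ℕ) (hq : 0 < q) :
    ∃ W : Fin q → Matrix (Fin d) (Fin d) ℝ,
      (∀ j, specNorm (W j - 1) ≤ Real.pi / q) ∧
      Λ = (List.ofFn W).prod := by
  obtain ⟨P, J, hP, hJ, hPJ, rfl⟩ :=
    exists_isComplexStructure_of_isDiag_of_det_eq_one hdiag hpm hdet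
  refine ⟨fun _ => cornerRotation P J (Real.pi / q), fun _ => ?_, ?_⟩
  · open scoped Matrix.Norms.L2Operator in
    calc specNorm _ = ‖cornerRotation P J (Real.pi / q) - 1‖ := specNorm_eq_l2_opNorm _
      _ ≤ |Real.pi / q| := hPJ.norm_cornerRotation_sub_one_le hP hJ _
      _ = Real.pi / q := abs_of_nonneg (by positivity)
  · rw [List.ofFn_const, List.prod_replicate, hPJ.cornerRotation_pow,
      mul_div_cancel₀ _ (by positivity), cornerRotation_pi]
end
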